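/- arXiv:1806.00579 — 13 statements merged into one kernel-verified Lean document; each statement's English description precedes it below -/
import Mathlib

section
/- Let α, β be real numbers with α < 0 and β > 0. Then for all real x, ⌊α·⌊β·x⌋⌋ ≥ ⌊β·⌊α·x⌋⌋; that is, the commutator relation [f_α, f_β] ≥ 0 holds. -/
theorem mul_floor_mul_le_mul_floor_mul_of_nonpos_of_nonneg {α β : ℝ} (hα : α ≤ 0) (hβ : 0 ≤ β)
    (x : ℝ) : β * ⌊α * x⌋ ≤ α * ⌊β * x⌋ :=
  calc β * ⌊α * x⌋ ≤ β * (α * x) := mul_le_mul_of_nonneg_left (Int.floor_le _) hβ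
    _ = α * (β * x) := by ring
    _ ≤ α * ⌊β * x⌋ := mul_le_mul_of_nonpos_left (Int.floor_le _) hα

/-- Mixed sign dilations: if α < 0 and β > 0, then the commutator relation
[f_α, f_β] ≥ 0 holds, i.e. ⌊α·⌊β·x⌋⌋ ≥ ⌊β·⌊α·x⌋⌋ for all real x. -/
theorem mixed_sign_nonneg_commutator (α β : ℝ) (hα : α < 0) (hβ : 0 < β) :
    ∀ x : ℝ, ⌊α * (⌊β * x⌋ : ℝ)⌋ ≥ ⌊β * (⌊α * x⌋ : ℝ)⌋ := fun x =>
  Int.floor_mono (mul_floor_mul_le_mul_floor_mul_of_nonpos_of_nonneg hα.le hβ.le x)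
end

section
/- Let α, β be real numbers with α > 0 and β < 0. Then there exists a real x such that ⌊α·⌊β·x⌋⌋ < ⌊β·⌊α·x⌋⌋; that is, the commutator relation [f_α, f_β] ≥ 0 fails. -/
/-- Mixed sign dilations: if α > 0 and β < 0, then the commutator relation
[f_α, f_β] ≥ 0 fails: there is a real x with ⌊α·⌊β·x⌋⌋ < ⌊β·⌊α·x⌋⌋. -/
theorem mixed_sign_commutator_fails (α β : ℝ) (hα : 0 < α) (hβ : β < 0) :
    ∃ x : ℝ, ⌊α * (⌊β * x⌋ : ℝ)⌋ < ⌊β * (⌊α * x⌋ : ℝ)⌋ := by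
  have hγ : 0 < α - β := by linarith
  -- `αx ∈ (0, 1)` and `βx ∈ (-1, 0)`, so the left side is `⌊-α⌋ < 0` while the right side is `0`.
  refine ⟨(α - β)⁻¹, ?_⟩
  have hαx : ⌊α * (α - β)⁻¹⌋ = 0 := by
    rw [Int.floor_eq_zero_iff, ← div_eq_mul_inv]
    exact ⟨by positivity, (div_lt_one hγ).2 (by linarith)⟩
  have hβx : ⌊β * (α - β)⁻¹⌋ = -1 := by
    rw [Int.floor_eq_iff, ← div_eq_mul_inv, le_div_iff₀ hγ]
    exact ⟨by push_cast; linarith, by norm_num; exact div_neg_of_neg_of_pos hβ hγ⟩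
  rw [hαx, hβx, Int.floor_lt]
  simpa using hα
end

section
/- The set { (α, β) ∈ ℝ² : (α ≥ 0 or β ≥ 0) and ⌊α·⌊β·x⌋⌋ ≥ ⌊β·⌊α·x⌋⌋ for all real x } is a closed subset of ℝ². -/
/-!
For `α ≤ 0 ≤ β` the relation holds by monotonicity of the floor, and for `α > 0 > β` it fails at
`x = 1 / (2α)`; so only limits with `α, β > 0` need an argument. A failure there has the form
`α m < j ≤ β k` with `k = ⌊α x⌋`, `m = ⌊β x⌋`. At a point `y` where `α y` and `β y` are not integers
the floors `⌊a y⌋`, `⌊b y⌋` are locally constant in `(a, b)`, so the relation at nearby `(a, b)`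
passes to the limit as long as `j ≤ b k` holds frequently, which gives `j ≤ α m`. Otherwise
`b k ≤ j` holds frequently, and the same argument on the level set `⌊α y⌋ = -k`, `⌊β y⌋ = -m - 1`
gives `α (m + 1) ≤ j ≤ β k < α (m + 1)`.
-/

open Filter Topology

/-- `[f_α, f_β] ≥ 0` for the dilated floor functions `f_α x = ⌊α x⌋`. -/
def FloorCommutatorNonneg (α β : ℝ) : Prop :=
  ∀ x : ℝ, ⌊α * (⌊β * x⌋ : ℝ)⌋ ≥ ⌊β * (⌊α * x⌋ : ℝ)⌋

theorem floorCommutatorNonneg_of_nonpos_of_nonneg {α β : ℝ} (hα : α ≤ 0) (hβ : 0 ≤ β) :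
    FloorCommutatorNonneg α β := fun x => Int.floor_mono <|
  calc β * ⌊α * x⌋ ≤ β * (α * x) := mul_le_mul_of_nonneg_left (Int.floor_le _) hβ
    _ = α * (β * x) := by ring
    _ ≤ α * ⌊β * x⌋ := mul_le_mul_of_nonpos_left (Int.floor_le _) hα

theorem not_floorCommutatorNonneg_of_pos_of_neg {α β : ℝ} (hα : 0 < α) (hβ : β < 0) :
    ¬ FloorCommutatorNonneg α β := by
  intro h
  set x := 1 / (2 * α) with hx
  have hαx : ⌊α * x⌋ = 0 := by
    rw [Int.floor_eq_zero_iff, hx, mul_one_div, div_mul_cancel_right₀ hα.ne']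
    norm_num
  have hβx : ⌊β * x⌋ < 0 := Int.floor_lt.mpr <| by
    rw [Int.cast_zero]
    exact mul_neg_of_neg_of_pos hβ (by positivity)
  have := h x
  rw [hαx, Int.cast_zero, mul_zero, Int.floor_zero] at this
  exact (Int.floor_nonneg.mp this).not_gt (mul_neg_of_pos_of_neg hα (by exact_mod_cast hβx))

theorem exists_floor_level_interior {α β : ℝ} (hα : 0 < α) (hβ : 0 < β) {K M : ℤ}
    (h₁ : β * K < α * (M + 1)) (h₂ : α * M < β * (K + 1)) :
    ∃ y, (K < α * y ∧ α * y < K + 1) ∧ (M < β * y ∧ β * y < M + 1) := by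
  have hne : (Set.Ioo (K / α) ((K + 1) / α) ∩ Set.Ioo (M / β) ((M + 1) / β)).Nonempty := by
    rw [Set.Ioo_inter_Ioo, Set.nonempty_Ioo, max_lt_iff, lt_min_iff, lt_min_iff,
      div_lt_div_iff₀ hα hα, div_lt_div_iff₀ hα hβ, div_lt_div_iff₀ hβ hα, div_lt_div_iff₀ hβ hβ]
    refine ⟨⟨by linarith, by linarith⟩, by linarith, by linarith⟩
  obtain ⟨y, ⟨hyK, hyK'⟩, hyM, hyM'⟩ := hne
  exact ⟨y, ⟨(div_lt_iff₀' hα).mp hyK, (lt_div_iff₀' hα).mp hyK'⟩,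
    (div_lt_iff₀' hβ).mp hyM, (lt_div_iff₀' hβ).mp hyM'⟩

theorem le_of_frequently_floorCommutatorNonneg {α β y : ℝ} {K M J : ℤ}
    (hK : K < α * y ∧ α * y < K + 1) (hM : M < β * y ∧ β * y < M + 1)
    (h : ∃ᶠ q in 𝓝 (α, β), FloorCommutatorNonneg q.1 q.2 ∧ (J : ℝ) ≤ q.2 * K) :
    (J : ℝ) ≤ α * M := by
  have hlevel : ∀ᶠ q in 𝓝 (α, β), ⌊q.1 * y⌋ = K ∧ ⌊q.2 * y⌋ = M := by
    filter_upwards [(continuous_fst.mul continuous_const).continuousAt.eventually_mem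
        (Ioo_mem_nhds hK.1 hK.2),
      (continuous_snd.mul continuous_const).continuousAt.eventually_mem
        (Ioo_mem_nhds hM.1 hM.2)] with q hq₁ hq₂
    exact ⟨Int.floor_eq_iff.mpr ⟨hq₁.1.le, hq₁.2⟩, Int.floor_eq_iff.mpr ⟨hq₂.1.le, hq₂.2⟩⟩
  have hfreq : ∃ᶠ q in 𝓝 (α, β), (J : ℝ) ≤ q.1 * M := by
    refine (h.and_eventually hlevel).mono fun q ⟨⟨hcomm, hJ⟩, hqK, hqM⟩ => ?_
    have := hcomm y
    rw [hqK, hqM] at this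
    exact Int.le_floor.mp ((Int.le_floor.mpr hJ).trans this)
  exact (isClosed_le continuous_const (continuous_fst.mul continuous_const))
    |>.mem_of_frequently_of_tendsto hfreq tendsto_id

theorem floorCommutatorNonneg_of_frequently {α β : ℝ} (hα : 0 < α) (hβ : 0 < β)
    (h : ∃ᶠ q in 𝓝 (α, β), FloorCommutatorNonneg q.1 q.2) : FloorCommutatorNonneg α β := by
  intro x
  by_contra! hx
  set k := ⌊α * x⌋
  set m := ⌊β * x⌋
  set j := ⌊β * k⌋
  have hmj : α * m < j := Int.floor_lt.mp hx
  have hjk : (j : ℝ) ≤ β * k := Int.floor_le _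
  have hkm : β * k < α * (m + 1) :=
    calc β * k ≤ β * (α * x) := mul_le_mul_of_nonneg_left (Int.floor_le _) hβ.le
      _ = α * (β * x) := by ring
      _ < α * (m + 1) := mul_lt_mul_of_pos_left (Int.lt_floor_add_one _) hα
  have hsplit : ∃ᶠ q in 𝓝 (α, β), (FloorCommutatorNonneg q.1 q.2 ∧ (j : ℝ) ≤ q.2 * k) ∨
      (FloorCommutatorNonneg q.1 q.2 ∧ ((-j : ℤ) : ℝ) ≤ q.2 * ((-k : ℤ) : ℝ)) :=
    h.mono fun q hq => by
      push_cast
      exact (le_total (j : ℝ) (q.2 * k)).imp (⟨hq, ·⟩) fun hle => ⟨hq, by linarith⟩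
  rcases frequently_or_distrib.mp hsplit with hup | hdown
  · obtain ⟨y, hyk, hym⟩ := exists_floor_level_interior hα hβ hkm (by linarith)
    linarith [le_of_frequently_floorCommutatorNonneg hyk hym hup]
  · obtain ⟨y, hyk, hym⟩ := exists_floor_level_interior hα hβ (K := -k) (M := -m - 1)
      (by push_cast; linarith) (by push_cast; linarith)
    have := le_of_frequently_floorCommutatorNonneg hyk hym hdown
    push_cast at this
    linarith

/-- The set of (α, β) with α ≥ 0 or β ≥ 0 satisfying the nonnegative commutator
relation [f_α, f_β] ≥ 0 is a closed subset of ℝ². -/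
theorem nonneg_commutator_set_closed :
    IsClosed {p : ℝ × ℝ | (0 ≤ p.1 ∨ 0 ≤ p.2) ∧
      ∀ x : ℝ, ⌊p.1 * (⌊p.2 * x⌋ : ℝ)⌋ ≥ ⌊p.2 * (⌊p.1 * x⌋ : ℝ)⌋} := by
  change IsClosed {p : ℝ × ℝ | (0 ≤ p.1 ∨ 0 ≤ p.2) ∧ FloorCommutatorNonneg p.1 p.2}
  refine isClosed_iff_frequently.mpr fun ⟨α, β⟩ h => ?_
  have hsign : 0 ≤ α ∨ 0 ≤ β :=
    ((isClosed_le continuous_const continuous_fst).union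
      (isClosed_le continuous_const continuous_snd)).mem_of_frequently_of_tendsto
      (h.mono fun _ hq => hq.1) tendsto_id
  refine ⟨hsign, ?_⟩
  have hcomm : ∃ᶠ q in 𝓝 (α, β), FloorCommutatorNonneg q.1 q.2 := h.mono fun _ hq => hq.2
  rcases le_or_gt α 0 with hα | hα
  · rcases hα.eq_or_lt with rfl | hα
    · simp [FloorCommutatorNonneg]
    · exact floorCommutatorNonneg_of_nonpos_of_nonneg hα.le (hsign.resolve_left hα.not_ge)
  rcases lt_trichotomy β 0 with hβ | rfl | hβ
  · have hquadrant : ∀ᶠ q : ℝ × ℝ in 𝓝 (α, β), 0 < q.1 ∧ q.2 < 0 :=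
      (isOpen_lt continuous_const continuous_fst).inter
        (isOpen_lt continuous_snd continuous_const) |>.mem_nhds ⟨hα, hβ⟩
    obtain ⟨q, hq, hq₁, hq₂⟩ := (hcomm.and_eventually hquadrant).exists
    exact absurd hq (not_floorCommutatorNonneg_of_pos_of_neg hq₁ hq₂)
  · simp [FloorCommutatorNonneg]
  · exact floorCommutatorNonneg_of_frequently hα hβ hcomm
end

section
/- Let α, β, γ be nonzero real numbers. If ⌊α·⌊β·x⌋⌋ ≥ ⌊β·⌊α·x⌋⌋ for all real x, and ⌊β·⌊γ·x⌋⌋ ≥ ⌊γ·⌊β·x⌋⌋ for all real x, then ⌊α·⌊γ·x⌋⌋ ≥ ⌊γ·⌊α·x⌋⌋ for all real x. In other words, the nonnegative commutator relation [f_α, f_β] ≥ 0 is transitive on nonzero dilation factors. -/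
/-!
For β > 0 and n ∈ ℤ we have n ≤ ⌊β⌊αx⌋⌋ iff β⌈n/β⌉ ≤ αβx, where β⌈n/β⌉ is the least multiple
of β that is at least n. As αβx ranges over all of ℝ, [f_α, f_β] ≥ 0 for α, β > 0 says exactly
that rounding n up to αℤ never overshoots rounding it up to βℤ, a comparison of one quantity per
factor, hence transitive. For α, β < 0 the same holds with β(⌊n/β⌋ + 1), the largest multiple of
β below n. With mixed signs the relation always holds when α < 0 < β and never when β < 0 < α,
which leaves only these two cases.
-/

def CommutatorNonneg (α β : ℝ) : Prop :=
  ∀ x : ℝ, ⌊β * ⌊α * x⌋⌋ ≤ ⌊α * ⌊β * x⌋⌋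

variable {α β γ : ℝ}

theorem commutatorNonneg_iff_forall_le_floor :
    CommutatorNonneg α β ↔ ∀ (n : ℤ) (x : ℝ), n ≤ ⌊β * ⌊α * x⌋⌋ → n ≤ ⌊α * ⌊β * x⌋⌋ :=
  (forall_congr' fun _ => forall_le_iff_le.symm).trans forall_comm

theorem le_floor_mul_floor_iff_of_pos (hβ : 0 < β) (n : ℤ) (x : ℝ) :
    n ≤ ⌊β * ⌊α * x⌋⌋ ↔ β * ⌈n / β⌉ ≤ α * β * x := by
  rw [Int.le_floor, ← div_le_iff₀' hβ, ← Int.ceil_le, Int.le_floor, mul_comm α β, mul_assoc,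
    mul_le_mul_iff_right₀ hβ]

theorem le_floor_mul_floor_iff_of_neg (hβ : β < 0) (n : ℤ) (x : ℝ) :
    n ≤ ⌊β * ⌊α * x⌋⌋ ↔ β * (⌊n / β⌋ + 1) < α * β * x := by
  rw [Int.le_floor, mul_comm β, ← le_div_iff_of_neg hβ, ← Int.le_floor, Int.floor_le_iff,
    mul_comm α β, mul_assoc, mul_lt_mul_left_of_neg hβ]

theorem commutatorNonneg_iff_of_pos (hα : 0 < α) (hβ : 0 < β) :
    CommutatorNonneg α β ↔ ∀ n : ℤ, α * ⌈n / α⌉ ≤ β * ⌈n / β⌉ := by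
  simp only [commutatorNonneg_iff_forall_le_floor, le_floor_mul_floor_iff_of_pos hα,
    le_floor_mul_floor_iff_of_pos hβ, mul_comm β α]
  refine forall_congr' fun n => ?_
  rw [← (mul_left_surjective₀ (mul_pos hα hβ).ne').forall (p := fun y => _ ≤ y → _ ≤ y)]
  exact forall_ge_iff_le

theorem commutatorNonneg_iff_of_neg (hα : α < 0) (hβ : β < 0) :
    CommutatorNonneg α β ↔ ∀ n : ℤ, α * (⌊n / α⌋ + 1) ≤ β * (⌊n / β⌋ + 1) := by
  simp only [commutatorNonneg_iff_forall_le_floor, le_floor_mul_floor_iff_of_neg hα,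
    le_floor_mul_floor_iff_of_neg hβ, mul_comm β α]
  refine forall_congr' fun n => ?_
  rw [← (mul_left_surjective₀ (mul_pos_of_neg_of_neg hα hβ).ne').forall
    (p := fun y => _ < y → _ < y)]
  exact forall_gt_iff_le

theorem commutatorNonneg_of_neg_of_pos (hα : α < 0) (hβ : 0 < β) : CommutatorNonneg α β :=
  fun x => Int.floor_le_floor <| calc
    β * ⌊α * x⌋ ≤ β * (α * x) := by gcongr; exact Int.floor_le _
    _ = α * (β * x) := by ring
    _ ≤ α * ⌊β * x⌋ := mul_le_mul_of_nonpos_left (Int.floor_le _) hα.le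

theorem not_commutatorNonneg_of_pos_of_neg (hα : 0 < α) (hβ : β < 0) : ¬CommutatorNonneg α β := by
  intro h
  set x := (2 * α)⁻¹
  have hx : 0 < x := by positivity
  have hαx : ⌊α * x⌋ = 0 := by
    rw [Int.floor_eq_zero_iff, show α * x = 1 / 2 by simp only [x]; field_simp]
    norm_num
  have hβx : (⌊β * x⌋ : ℝ) < 0 := by
    exact_mod_cast Int.floor_lt.2 (by simpa using mul_neg_of_neg_of_pos hβ hx)
  have := h x
  rw [hαx, Int.cast_zero, mul_zero, Int.floor_zero, Int.le_floor, Int.cast_zero] at this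
  exact (mul_neg_of_pos_of_neg hα hβx).not_ge this

theorem CommutatorNonneg.trans_of_pos (hα : 0 < α) (hβ : 0 < β) (hγ : 0 < γ)
    (hαβ : CommutatorNonneg α β) (hβγ : CommutatorNonneg β γ) : CommutatorNonneg α γ := by
  rw [commutatorNonneg_iff_of_pos hα hβ] at hαβ
  rw [commutatorNonneg_iff_of_pos hβ hγ] at hβγ
  exact (commutatorNonneg_iff_of_pos hα hγ).2 fun n => (hαβ n).trans (hβγ n)

theorem CommutatorNonneg.trans_of_neg (hα : α < 0) (hβ : β < 0) (hγ : γ < 0)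
    (hαβ : CommutatorNonneg α β) (hβγ : CommutatorNonneg β γ) : CommutatorNonneg α γ := by
  rw [commutatorNonneg_iff_of_neg hα hβ] at hαβ
  rw [commutatorNonneg_iff_of_neg hβ hγ] at hβγ
  exact (commutatorNonneg_iff_of_neg hα hγ).2 fun n => (hαβ n).trans (hβγ n)

/-- Nonnegative commutator transitivity: for nonzero dilation factors α, β, γ,
[f_α, f_β] ≥ 0 and [f_β, f_γ] ≥ 0 imply [f_α, f_γ] ≥ 0. -/
theorem nonneg_commutator_transitive (α β γ : ℝ) (hα : α ≠ 0) (hβ : β ≠ 0) (hγ : γ ≠ 0)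
    (h1 : ∀ x : ℝ, ⌊α * (⌊β * x⌋ : ℝ)⌋ ≥ ⌊β * (⌊α * x⌋ : ℝ)⌋)
    (h2 : ∀ x : ℝ, ⌊β * (⌊γ * x⌋ : ℝ)⌋ ≥ ⌊γ * (⌊β * x⌋ : ℝ)⌋) :
    ∀ x : ℝ, ⌊α * (⌊γ * x⌋ : ℝ)⌋ ≥ ⌊γ * (⌊α * x⌋ : ℝ)⌋ := by
  rcases hα.lt_or_gt with hα | hα
  · rcases hγ.lt_or_gt with hγ | hγ
    · have hβ : β < 0 :=
        hβ.lt_or_gt.resolve_right fun hβ => not_commutatorNonneg_of_pos_of_neg hβ hγ h2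
      exact CommutatorNonneg.trans_of_neg hα hβ hγ h1 h2
    · exact commutatorNonneg_of_neg_of_pos hα hγ
  · have hβ : 0 < β :=
      hβ.lt_or_gt.resolve_left fun hβ => not_commutatorNonneg_of_pos_of_neg hα hβ h1
    have hγ : 0 < γ :=
      hγ.lt_or_gt.resolve_left fun hγ => not_commutatorNonneg_of_pos_of_neg hβ hγ h2
    exact CommutatorNonneg.trans_of_pos hα hβ hγ h1 h2
end

section
/- Let α, β be real numbers with α > 0 and β > 0. If ⌊α·⌊β·x⌋⌋ ≥ ⌊β·⌊α·x⌋⌋ for all real x, then ⌊(α/β)·⌊(1/β)·x⌋⌋ ≥ ⌊(1/β)·⌊(α/β)·x⌋⌋ for all real x. That is, the positive-dilation part of the nonnegative commutator set S is invariant under the birational involution (α, β) ↦ (α/β, 1/β). -/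
/-!
Put `p = ⌊(α/β) x⌋`, `m = ⌊p/β⌋`, `k = ⌊x/β⌋`; the claim is `β m ≤ α k`. Reflecting the
hypothesis through `x ↦ -x` turns it into `⌈α ⌈β y⌉⌉ ≤ ⌈β ⌈α y⌉⌉`, and at `y = m/α` this reads
`⌈α c⌉ ≤ ⌈β m⌉ ≤ p` with `c = ⌈β m / α⌉`. Hence `α c ≤ p ≤ (α/β) x`, so `c ≤ k`, and
`β m ≤ α c ≤ α k`.
-/

theorem ceil_mul_ceil_le_of_floor_mul_floor_ge {α β : ℝ}
    (h : ∀ x : ℝ, ⌊α * (⌊β * x⌋ : ℝ)⌋ ≥ ⌊β * (⌊α * x⌋ : ℝ)⌋) (y : ℝ) :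
    ⌈α * (⌈β * y⌉ : ℝ)⌉ ≤ ⌈β * (⌈α * y⌉ : ℝ)⌉ := by
  have hy := h (-y)
  simp only [mul_neg, Int.floor_neg, Int.cast_neg] at hy
  omega

theorem intCast_le_floor_mul_iff {γ : ℝ} (hγ : 0 < γ) (n : ℤ) (t : ℝ) :
    n ≤ ⌊(1 / γ) * t⌋ ↔ γ * n ≤ t := by
  rw [Int.le_floor, one_div_mul_eq_div, le_div_iff₀ hγ, mul_comm]

/-- First quadrant birational symmetry of S: for α, β > 0, if (α, β) ∈ S then
(α/β, 1/β) ∈ S. -/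
theorem birational_symmetry_of_S (α β : ℝ) (hα : 0 < α) (hβ : 0 < β)
    (h : ∀ x : ℝ, ⌊α * (⌊β * x⌋ : ℝ)⌋ ≥ ⌊β * (⌊α * x⌋ : ℝ)⌋) :
    ∀ x : ℝ, ⌊(α / β) * (⌊(1 / β) * x⌋ : ℝ)⌋ ≥ ⌊(1 / β) * (⌊(α / β) * x⌋ : ℝ)⌋ := by
  intro x
  set k := ⌊(1 / β) * x⌋
  set p := ⌊(α / β) * x⌋
  set m := ⌊(1 / β) * (p : ℝ)⌋
  set c := ⌈β * ((m : ℝ) / α)⌉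
  have hmp : β * m ≤ p := (intCast_le_floor_mul_iff hβ m p).1 le_rfl
  have hcomm : ⌈α * (c : ℝ)⌉ ≤ ⌈β * (m : ℝ)⌉ := by
    simpa [mul_div_cancel₀ _ hα.ne'] using ceil_mul_ceil_le_of_floor_mul_floor_ge h (m / α)
  have hcp : α * c ≤ p :=
    (Int.le_ceil _).trans (by exact_mod_cast hcomm.trans (Int.ceil_le.2 hmp))
  have hpx : β * p ≤ α * x := by
    calc β * (p : ℝ) ≤ β * ((α / β) * x) := by gcongr; exact Int.floor_le _
      _ = α * x := by field_simp
  have hck : c ≤ k := by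
    rw [intCast_le_floor_mul_iff hβ]
    refine le_of_mul_le_mul_left ?_ hα
    calc α * (β * c) = β * (α * c) := by ring
      _ ≤ β * p := by gcongr
      _ ≤ α * x := hpx
  have hmc : β * m ≤ α * c := by
    have := Int.le_ceil (β * ((m : ℝ) / α))
    calc β * (m : ℝ) = α * (β * ((m : ℝ) / α)) := by field_simp
      _ ≤ α * c := by gcongr
  have hk : α * c ≤ α * k := by gcongr
  rw [ge_iff_le, Int.le_floor, div_mul_eq_mul_div, le_div_iff₀ hβ, mul_comm]
  exact hmc.trans hk
end

section
/- Let α, β be nonzero real numbers. Then ⌊α·⌊β·x⌋⌋ ≥ ⌊β·⌊α·x⌋⌋ holds for all real x if and only if ⌊α·⌊y/α⌋⌋ ≥ ⌊β·⌊y/β⌋⌋ holds for all real y. -/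
/-- Separation of variables criterion: for nonzero α, β, the nonnegative commutator
relation [f_α, f_β] ≥ 0 holds iff ⌊α·⌊y/α⌋⌋ ≥ ⌊β·⌊y/β⌋⌋ for all real y. -/
theorem separation_of_variables (α β : ℝ) (hα : α ≠ 0) (hβ : β ≠ 0) :
    (∀ x : ℝ, ⌊α * (⌊β * x⌋ : ℝ)⌋ ≥ ⌊β * (⌊α * x⌋ : ℝ)⌋) ↔
      (∀ y : ℝ, ⌊α * (⌊y / α⌋ : ℝ)⌋ ≥ ⌊β * (⌊y / β⌋ : ℝ)⌋) :=
  (Equiv.mulLeft₀ (α * β) (mul_ne_zero hα hβ)).forall_congr fun {x} => by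
    simp only [Equiv.mulLeft₀_apply]
    rw [mul_assoc, mul_div_cancel_left₀ _ hα, mul_left_comm,
      mul_div_cancel_left₀ _ hβ]
end

section
/- Let α, β be real numbers with α > 0 and β > 0. Then α·⌊x/α⌋ ≤ β·⌊x/β⌋ holds for all real x if and only if there exists an integer m ≥ 1 such that α = m·β. -/
/-! `α * ⌊x / α⌋` is the largest integer multiple of `α` not exceeding `x`. If `α = m * β`, it is
in particular a multiple of `β` below `x`, hence below `β * ⌊x / β⌋`. Conversely, taking `x = α`
gives `α ≤ β * ⌊α / β⌋ ≤ α`, so `α / β` is an integer, positive since `α` and `β` are. -/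

theorem mul_floor_div_le {α : ℝ} (hα : 0 < α) (x : ℝ) : α * ⌊x / α⌋ ≤ x :=
  (le_div_iff₀' hα).mp (Int.floor_le _)

theorem mul_le_mul_floor_div_of_mul_le {β x : ℝ} (hβ : 0 < β) {k : ℤ} (hk : k * β ≤ x) :
    k * β ≤ β * ⌊x / β⌋ := by
  have hk' : k ≤ ⌊x / β⌋ := Int.le_floor.mpr ((le_div_iff₀ hβ).mpr hk)
  rw [mul_comm]
  exact mul_le_mul_of_nonneg_left (Int.cast_le.mpr hk') hβ.le

/-- Rounding function ordering (lower): for α, β > 0, the inequality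
α·⌊x/α⌋ ≤ β·⌊x/β⌋ holds for all x iff α = m·β for some integer m ≥ 1. -/
theorem lower_rounding_ordering (α β : ℝ) (hα : 0 < α) (hβ : 0 < β) :
    (∀ x : ℝ, α * (⌊x / α⌋ : ℝ) ≤ β * (⌊x / β⌋ : ℝ)) ↔
      ∃ m : ℤ, 1 ≤ m ∧ α = (m : ℝ) * β := by
  constructor
  · intro h
    have hα_le : α ≤ β * ⌊α / β⌋ := by simpa [div_self hα.ne'] using h α
    have hα_eq : α = ⌊α / β⌋ * β := by
      linarith [le_antisymm (mul_floor_div_le hβ α) hα_le]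
    refine ⟨⌊α / β⌋, ?_, hα_eq⟩
    have : (0 : ℝ) < ⌊α / β⌋ := pos_of_mul_pos_left (hα_eq ▸ hα) hβ.le
    exact_mod_cast this
  · rintro ⟨m, -, rfl⟩ x
    calc m * β * ⌊x / (m * β)⌋ = ((m * ⌊x / (m * β)⌋ : ℤ) : ℝ) * β := by push_cast; ring
      _ ≤ β * ⌊x / β⌋ :=
        mul_le_mul_floor_div_of_mul_le hβ (by push_cast; linarith [mul_floor_div_le hα x])
end

section
/- Let α, β be real numbers with α > 0 and β > 0. Then α·⌈x/α⌉ ≤ β·⌈x/β⌉ holds for all real x if and only if there exists an integer m ≥ 1 such that β = m·α. -/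
/-! `α * ⌈x / α⌉` is the least multiple of `α` that is at least `x`. If `β = m α`, then
`β * ⌈x / β⌉` is such a multiple of `α`, hence dominates `α * ⌈x / α⌉`. Conversely, at `x = β`
the right-hand side is `β` itself, which squeezes `β = α * ⌈β / α⌉`. -/

section CeilMultiple

variable {K : Type*} [Field K] [LinearOrder K] [IsStrictOrderedRing K] [FloorRing K]

theorem le_mul_ceil_div {α : K} (hα : 0 < α) (x : K) : x ≤ α * ⌈x / α⌉ :=
  (div_le_iff₀' hα).mp (Int.le_ceil _)

theorem mul_ceil_div_le_of_le_mul {α x : K} {k : ℤ} (hα : 0 < α) (h : x ≤ α * k) :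
    α * ⌈x / α⌉ ≤ α * k := by
  gcongr
  exact_mod_cast Int.ceil_le.mpr ((div_le_iff₀' hα).mpr h)

theorem mul_ceil_div_self {β : K} (hβ : β ≠ 0) : β * ⌈β / β⌉ = β := by
  simp [div_self hβ]

end CeilMultiple

/-- Rounding function ordering (upper): for α, β > 0, the inequality
α·⌈x/α⌉ ≤ β·⌈x/β⌉ holds for all x iff β = m·α for some integer m ≥ 1. -/
theorem upper_rounding_ordering (α β : ℝ) (hα : 0 < α) (hβ : 0 < β) :
    (∀ x : ℝ, α * (⌈x / α⌉ : ℝ) ≤ β * (⌈x / β⌉ : ℝ)) ↔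
      ∃ m : ℤ, 1 ≤ m ∧ β = (m : ℝ) * α := by
  constructor
  · intro h
    have hβ_eq : β = α * ⌈β / α⌉ :=
      le_antisymm (le_mul_ceil_div hα β) ((h β).trans_eq (mul_ceil_div_self hβ.ne'))
    exact ⟨⌈β / α⌉, Int.one_le_ceil_iff.mpr (div_pos hβ hα), hβ_eq.trans (mul_comm _ _)⟩
  · rintro ⟨m, -, rfl⟩ x
    have hx : x ≤ α * ↑(m * ⌈x / (m * α)⌉) := by
      push_cast
      rw [← mul_assoc, mul_comm α]
      exact le_mul_ceil_div hβ x
    calc α * (⌈x / α⌉ : ℝ) ≤ α * ↑(m * ⌈x / (m * α)⌉) := mul_ceil_div_le_of_le_mul hα hx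
      _ = m * α * ⌈x / (m * α)⌉ := by push_cast; ring
end

section
/- Let α, β be real numbers with α > 0 and β > 0. Then ⌊α·⌊β·x⌋⌋ ≥ ⌊β·⌊α·x⌋⌋ holds for all real x if and only if α·⌈n/α⌉ ≤ β·⌈n/β⌉ holds for all integers n. -/
/-!
Both sides of the commutator inequality are integers, so it suffices to compare the integers `n`
below each. For `c > 0`, `n ≤ ⌊c * ⌊d * x⌋⌋` holds exactly when `⌈n / c⌉ ≤ ⌊d * x⌋`, that is,
when `⌈n⌉_c ≤ c * d * x`. As `t = α * β * x` ranges over all reals, the commutator inequality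
thus says that `⌈n⌉_β ≤ t` implies `⌈n⌉_α ≤ t` for all `n` and `t`, i.e. `⌈n⌉_α ≤ ⌈n⌉_β`.
-/

section UpperRound

variable {K : Type*} [Field K] [LinearOrder K] [IsStrictOrderedRing K] [FloorRing K] {c : K}

/-- The upper rounding `⌈x⌉_c`. -/
def upperRound (c x : K) : K := c * ⌈x / c⌉

theorem Int.le_floor_mul_intCast_iff (hc : 0 < c) (n m : ℤ) :
    n ≤ ⌊c * m⌋ ↔ ⌈(n : K) / c⌉ ≤ m := by
  rw [Int.le_floor, Int.ceil_le, div_le_iff₀ hc, mul_comm]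

theorem Int.le_floor_mul_floor_iff (hc : 0 < c) (d x : K) (n : ℤ) :
    n ≤ ⌊c * ⌊d * x⌋⌋ ↔ upperRound c (n : K) ≤ c * d * x := by
  rw [Int.le_floor_mul_intCast_iff hc, Int.le_floor, upperRound, mul_assoc,
    mul_le_mul_iff_right₀ hc]

end UpperRound

/-- Rounding function criterion: for α, β > 0, the nonnegative commutator relation
[f_α, f_β] ≥ 0 holds iff α·⌈n/α⌉ ≤ β·⌈n/β⌉ for all integers n. -/
theorem rounding_function_criterion (α β : ℝ) (hα : 0 < α) (hβ : 0 < β) :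
    (∀ x : ℝ, ⌊α * (⌊β * x⌋ : ℝ)⌋ ≥ ⌊β * (⌊α * x⌋ : ℝ)⌋) ↔
      (∀ n : ℤ, α * (⌈(n : ℝ) / α⌉ : ℝ) ≤ β * (⌈(n : ℝ) / β⌉ : ℝ)) :=
  calc (∀ x : ℝ, ⌊α * (⌊β * x⌋ : ℝ)⌋ ≥ ⌊β * (⌊α * x⌋ : ℝ)⌋)
      ↔ ∀ x : ℝ, ∀ n : ℤ,
          upperRound β (n : ℝ) ≤ α * β * x → upperRound α (n : ℝ) ≤ α * β * x := by
        refine forall_congr' fun x => ?_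
        rw [ge_iff_le, ← forall_le_iff_le]
        simp only [Int.le_floor_mul_floor_iff hα, Int.le_floor_mul_floor_iff hβ, mul_comm β α]
    _ ↔ ∀ t : ℝ, ∀ n : ℤ, upperRound β (n : ℝ) ≤ t → upperRound α (n : ℝ) ≤ t :=
        (mul_left_surjective₀ (mul_pos hα hβ).ne').forall
          (p := fun t => ∀ n : ℤ, upperRound β (n : ℝ) ≤ t → upperRound α (n : ℝ) ≤ t) |>.symm
    _ ↔ ∀ n : ℤ, upperRound α (n : ℝ) ≤ upperRound β n :=
        forall_comm.trans (forall_congr' fun _ => forall_ge_iff_le)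
end

section
/- Let μ, ν be real numbers with μ > 0 and ν > 0. Then ⌊(1/μ)·⌊(ν/μ)·x⌋⌋ ≥ ⌊(ν/μ)·⌊(1/μ)·x⌋⌋ holds for all real x if and only if the reduced Beatty sequences B₀(μ) and B₀(ν) over ℤ are disjoint. -/
/-!
As `x ↦ ⌊(ν/μ) x⌋` is monotone, the commutator inequality can only fail at the points `x = mμ`,
and there it fails iff some multiple `kμ` lies in `(⌊mν⌋, mν]`. Then `kμ` and `mν` lie in the
same open interval `(n, n + 1)`, so `n` belongs to both reduced Beatty sequences. Conversely a
common value `n = ⌊pμ⌋ = ⌊qν⌋` gives such a configuration, after replacing `(p, q)` by `(-p, -q)`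
when `pμ > qν`.
-/

/-- The reduced Beatty sequence over ℤ of a positive real u:
B₀(u) = { ⌊n·u⌋ : n ∈ ℤ, n·u ∉ ℤ }. -/
def reducedBeatty (u : ℝ) : Set ℤ :=
  {k : ℤ | ∃ n : ℤ, (n : ℝ) * u ∉ Set.range ((↑) : ℤ → ℝ) ∧ ⌊(n : ℝ) * u⌋ = k}

lemma Int.floor_floor_div_lt_floor_div_iff {μ : ℝ} (hμ : 0 < μ) (y : ℝ) :
    ⌊(⌊y⌋ : ℝ) / μ⌋ < ⌊y / μ⌋ ↔ ∃ k : ℤ, (⌊y⌋ : ℝ) < k * μ ∧ k * μ ≤ y := by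
  simp only [Int.floor_lt, ← le_div_iff₀ hμ, ← div_lt_iff₀ hμ]
  constructor
  · exact fun h ↦ ⟨_, h, Int.floor_le _⟩
  · rintro ⟨k, hlt, hle⟩
    exact hlt.trans_le (Int.cast_le.mpr (Int.le_floor.mpr hle))

lemma mem_reducedBeatty_iff {u : ℝ} {k : ℤ} :
    k ∈ reducedBeatty u ↔ ∃ n : ℤ, (k : ℝ) < n * u ∧ n * u < k + 1 := by
  refine exists_congr fun n ↦ ⟨fun ⟨hn, hk⟩ ↦ ?_, fun ⟨hlt, hlt'⟩ ↦ ⟨?_, ?_⟩⟩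
  · subst hk
    refine ⟨(Int.floor_le _).lt_of_ne fun h ↦ hn ⟨_, h⟩, Int.lt_floor_add_one _⟩
  · rintro ⟨t, ht⟩
    rw [← ht] at hlt hlt'
    norm_cast at hlt hlt'
    omega
  · exact Int.floor_eq_iff.mpr ⟨hlt.le, hlt'⟩

lemma not_disjoint_reducedBeatty_iff {μ ν : ℝ} :
    ¬Disjoint (reducedBeatty μ) (reducedBeatty ν) ↔
      ∃ m k : ℤ, (⌊m * ν⌋ : ℝ) < k * μ ∧ k * μ ≤ m * ν := by
  simp only [Set.not_disjoint_iff, mem_reducedBeatty_iff]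
  constructor
  · rintro ⟨a, ⟨p, hp, hp'⟩, q, hq, hq'⟩
    have hqa : ⌊(q : ℝ) * ν⌋ = a := Int.floor_eq_iff.mpr ⟨hq.le, hq'⟩
    rcases le_or_gt ((p : ℝ) * μ) (q * ν) with hle | hlt
    · exact ⟨q, p, by rwa [hqa], hle⟩
    · -- negating `p` and `q` reverses their order and moves the common floor `a` to `-(a + 1)`
      have hqa' : ⌊((-q : ℤ) : ℝ) * ν⌋ = -(a + 1) := by
        rw [Int.floor_eq_iff]; push_cast; constructor <;> linarith
      exact ⟨-q, -p, by rw [hqa']; push_cast; linarith, by push_cast; linarith⟩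
  · rintro ⟨m, k, hlt, hle⟩
    have hmν := Int.lt_floor_add_one ((m : ℝ) * ν)
    exact ⟨⌊(m : ℝ) * ν⌋, ⟨k, hlt, by linarith⟩, m, hlt.trans_le hle, hmν⟩

lemma exists_commutator_neg_iff_exists_int {μ ν : ℝ} (hμ : 0 < μ) (hν : 0 ≤ ν) :
    (∃ x : ℝ, ⌊(1 / μ) * (⌊(ν / μ) * x⌋ : ℝ)⌋ < ⌊(ν / μ) * (⌊(1 / μ) * x⌋ : ℝ)⌋) ↔
      ∃ m : ℤ, ⌊(⌊m * ν⌋ : ℝ) / μ⌋ < ⌊m * ν / μ⌋ := by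
  have hμ0 : μ ≠ 0 := hμ.ne'
  constructor
  · rintro ⟨x, hx⟩
    refine ⟨⌊(1 / μ) * x⌋, lt_of_le_of_lt ?_ (hx.trans_eq ?_)⟩
    · have hmx : (⌊(1 / μ) * x⌋ : ℝ) * ν ≤ (ν / μ) * x := calc
        _ ≤ (1 / μ) * x * ν := by gcongr; exact Int.floor_le _
        _ = (ν / μ) * x := by ring
      rw [← one_div_mul_eq_div]
      exact Int.floor_mono (by gcongr)
    · ring_nf
  · rintro ⟨m, hm⟩
    refine ⟨m * μ, ?_⟩
    have h1 : (1 / μ) * (m * μ) = m := by field_simp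
    have h2 : (ν / μ) * (m * μ) = m * ν := by field_simp
    rw [h1, h2, Int.floor_intCast, one_div_mul_eq_div]
    convert hm using 3
    ring

/-- Beatty disjointness criterion: for μ, ν > 0, [f_{1/μ}, f_{ν/μ}] ≥ 0 holds iff
the reduced Beatty sequences B₀(μ) and B₀(ν) over ℤ are disjoint. -/
theorem beatty_disjointness_criterion (μ ν : ℝ) (hμ : 0 < μ) (hν : 0 < ν) :
    (∀ x : ℝ, ⌊(1 / μ) * (⌊(ν / μ) * x⌋ : ℝ)⌋ ≥ ⌊(ν / μ) * (⌊(1 / μ) * x⌋ : ℝ)⌋) ↔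
      Disjoint (reducedBeatty μ) (reducedBeatty ν) := by
  rw [← not_iff_not, not_disjoint_reducedBeatty_iff]
  simp only [not_forall, ge_iff_le, not_le]
  rw [exists_commutator_neg_iff_exists_int hμ hν.le]
  exact exists_congr fun m ↦ Int.floor_floor_div_lt_floor_div_iff hμ _
end

section
/- Let μ, ν be real numbers with μ > 0, ν > 0 and 1/μ + 1/ν = 1. Then for all integers m, n it is not the case that ⌊n·ν⌋ < m·μ and m·μ < ⌈n·ν⌉ (as inequalities of real numbers); that is, the rectangular lattice μℤ × νℤ is disjoint from the enlarged diagonal region D = { (x, y) : ⌊y⌋ < x < ⌈y⌉ }. -/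
/-!
Write `k = ⌊n ν⌋`. Since `⌈n ν⌉ ≤ k + 1`, a lattice point of `D` would give `m μ ∈ (k, k + 1)` and
`n ν ∈ [k, k + 1]`. The weights `1/μ, 1/ν` are positive and sum to `1`, so the integer
`m + n = (1/μ)(m μ) + (1/ν)(n ν)` would lie strictly between `k` and `k + 1`.
-/

open Set

lemma add_mul_mem_Ioo_of_mem_Ioo_of_mem_Icc {a b x y s t : ℝ} (ha : 0 < a) (hb : 0 ≤ b)
    (hab : a + b = 1) (hx : x ∈ Ioo s t) (hy : y ∈ Icc s t) : a * x + b * y ∈ Ioo s t := by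
  obtain ⟨hsx, hxt⟩ := hx
  obtain ⟨hsy, hyt⟩ := hy
  have hs : s = a * s + b * s := by rw [← add_mul, hab, one_mul]
  have ht : t = a * t + b * t := by rw [← add_mul, hab, one_mul]
  constructor
  · linarith [mul_lt_mul_of_pos_left hsx ha, mul_le_mul_of_nonneg_left hsy hb]
  · linarith [mul_lt_mul_of_pos_left hxt ha, mul_le_mul_of_nonneg_left hyt hb]

/-- Rectangular hyperbola sufficiency: if μ, ν > 0 satisfy 1/μ + 1/ν = 1, then the
lattice μℤ × νℤ is disjoint from the enlarged diagonal region
D = { (x, y) : ⌊y⌋ < x < ⌈y⌉ }. -/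
theorem hyperbola_lattice_disjoint (μ ν : ℝ) (hμ : 0 < μ) (hν : 0 < ν)
    (h : 1 / μ + 1 / ν = 1) :
    ∀ m n : ℤ, ¬ ((⌊(n : ℝ) * ν⌋ : ℝ) < (m : ℝ) * μ ∧
      (m : ℝ) * μ < (⌈(n : ℝ) * ν⌉ : ℝ)) := by
  rintro m n ⟨h_floor_lt, h_lt_ceil⟩
  set k : ℤ := ⌊(n : ℝ) * ν⌋
  have h_ceil : ((⌈(n : ℝ) * ν⌉ : ℤ) : ℝ) ≤ k + 1 := by
    exact_mod_cast Int.ceil_le_floor_add_one _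
  have hm : (m : ℝ) * μ ∈ Ioo (k : ℝ) (k + 1) := ⟨h_floor_lt, h_lt_ceil.trans_le h_ceil⟩
  have hn : (n : ℝ) * ν ∈ Icc (k : ℝ) (k + 1) :=
    ⟨Int.floor_le _, (Int.le_ceil _).trans h_ceil⟩
  have h_combo : ((m + n : ℤ) : ℝ) = 1 / μ * (m * μ) + 1 / ν * (n * ν) := by
    push_cast
    field_simp
  obtain ⟨h_lo, h_hi⟩ := h_combo ▸
    add_mul_mem_Ioo_of_mem_Ioo_of_mem_Icc (by positivity) (by positivity) h hm hn
  have : k < m + n := by exact_mod_cast h_lo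
  have : m + n < k + 1 := by exact_mod_cast h_hi
  omega
end

section
/- Let μ, ν be real numbers with μ > 0 and ν > 0, and suppose there exist natural numbers m, n ≥ 0 such that m/μ + n/ν = 1. Then ⌊(1/μ)·⌊(ν/μ)·x⌋⌋ ≥ ⌊(ν/μ)·⌊(1/μ)·x⌋⌋ holds for all real x. -/
/-!
For `α, β > 0` and an integer `k`, `k ≤ ⌊α ⌊β x⌋⌋` holds exactly when `x ≥ ⌈k / α⌉ / β`.
Hence `⌊β ⌊α x⌋⌋ ≤ ⌊α ⌊β x⌋⌋` for all `x` as soon as `α ⌈k / α⌉ ≤ β ⌈k / β⌉` for every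
integer `k`. With `α = 1 / μ`, `β = ν / μ` the hypothesis reads `1 / α = m + n / β`, so
`⌈k / α⌉ = m k + ⌈n k / β⌉ ≤ m k + n ⌈k / β⌉`, and multiplying by `α` while using
`k ≤ β ⌈k / β⌉` gives `α ⌈k / α⌉ ≤ α (m β + n) ⌈k / β⌉ = β ⌈k / β⌉`.
-/

theorem le_floor_mul_floor_iff {α β : ℝ} (hα : 0 < α) (hβ : 0 < β) (k : ℤ) (x : ℝ) :
    k ≤ ⌊α * ⌊β * x⌋⌋ ↔ ⌈k / α⌉ / β ≤ x := by
  rw [Int.le_floor, ← div_le_iff₀' hα, ← Int.ceil_le, Int.le_floor, div_le_iff₀' hβ]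

theorem floor_mul_floor_le_of_mul_ceil_div_le {α β : ℝ} (hα : 0 < α) (hβ : 0 < β)
    (hceil : ∀ k : ℤ, α * ⌈k / α⌉ ≤ β * ⌈k / β⌉) (x : ℝ) :
    ⌊β * ⌊α * x⌋⌋ ≤ ⌊α * ⌊β * x⌋⌋ := by
  set k := ⌊β * ⌊α * x⌋⌋
  have hx : ⌈k / β⌉ / α ≤ x := (le_floor_mul_floor_iff hβ hα k x).1 le_rfl
  refine (le_floor_mul_floor_iff hα hβ k x).2 (le_trans ?_ hx)
  rw [div_le_div_iff₀ hβ hα, mul_comm, mul_comm (⌈(k : ℝ) / β⌉ : ℝ)]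
  exact hceil k

theorem ceil_natCast_mul_le (n : ℕ) (y : ℝ) : ⌈n * y⌉ ≤ n * ⌈y⌉ := by
  rw [Int.ceil_le]
  push_cast
  exact mul_le_mul_of_nonneg_left (Int.le_ceil y) n.cast_nonneg

theorem mul_ceil_div_le_of_inv_eq {α β : ℝ} (hα : 0 < α) (hβ : 0 < β) {m n : ℕ}
    (hrel : α⁻¹ = m + n / β) (k : ℤ) : α * ⌈k / α⌉ ≤ β * ⌈k / β⌉ := by
  set c := ⌈(k : ℝ) / β⌉
  have hk : (k : ℝ) ≤ β * c := (div_le_iff₀' hβ).1 (Int.le_ceil _)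
  have hsplit : ⌈(k : ℝ) / α⌉ = ⌈n * (k / β)⌉ + m * k := by
    rw [div_eq_mul_inv, hrel, ← Int.ceil_add_intCast]
    push_cast
    ring_nf
  have hβα : α * (m * β + n) = β := by
    field_simp at hrel
    linear_combination -hrel
  have hceil : (⌈(k : ℝ) / α⌉ : ℝ) ≤ m * (β * c) + n * c := by
    rw [hsplit]
    push_cast
    have hn : (⌈n * ((k : ℝ) / β)⌉ : ℝ) ≤ n * c := by
      exact_mod_cast ceil_natCast_mul_le n (k / β)
    linarith [mul_le_mul_of_nonneg_left hk m.cast_nonneg]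
  calc α * ⌈(k : ℝ) / α⌉ ≤ α * (m * (β * c) + n * c) :=
        mul_le_mul_of_nonneg_left hceil hα.le
    _ = β * c := by linear_combination (c : ℝ) * hβα

/-- Sufficiency in (μ, ν)-coordinates: if μ, ν > 0 and m/μ + n/ν = 1 for some
naturals m, n, then [f_{1/μ}, f_{ν/μ}] ≥ 0 holds. -/
theorem sufficiency_uv (μ ν : ℝ) (hμ : 0 < μ) (hν : 0 < ν)
    (h : ∃ m n : ℕ, (m : ℝ) / μ + (n : ℝ) / ν = 1) :
    ∀ x : ℝ, ⌊(1 / μ) * (⌊(ν / μ) * x⌋ : ℝ)⌋ ≥ ⌊(ν / μ) * (⌊(1 / μ) * x⌋ : ℝ)⌋ := by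
  obtain ⟨m, n, hmn⟩ := h
  have hrel : (1 / μ)⁻¹ = m + n / (ν / μ) := by
    field_simp at hmn ⊢
    linarith
  exact floor_mul_floor_le_of_mul_ceil_div_le (by positivity) (by positivity)
    (mul_ceil_div_le_of_inv_eq (by positivity) (by positivity) hrel)
end

section
/- Let σ, τ be real numbers with σ > 0 and τ > 0. Then ⌊σ·⌊(σ/τ)·x⌋⌋ ≥ ⌊(σ/τ)·⌊σ·x⌋⌋ holds for all real x if and only if for all integers k, m, n it is not the case that 0 < k·σ − m < σ and 0 < k·τ − n < τ. Equivalently, the cyclic subgroup of the torus ℝ²/ℤ² generated by the image of (σ, τ) is disjoint from the image in ℝ²/ℤ² of the open corner rectangle { (x, y) ∈ ℝ² : 0 < x < σ and 0 < y < τ }. -/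
/-!
With `α = σ / τ`, the right-hand side `⌊α * ⌊σ * x⌋⌋` only depends on `N = ⌊σ * x⌋` while the
left-hand side is monotone in `x`, so it suffices to test `x = N / σ`. There the inequality fails
exactly when some integer `m` has `⌊N / τ⌋ < m / σ ≤ N / τ`, i.e. when `m / σ` and `N / τ` lie in a
common open unit interval `(k - 1, k)`; and `m / σ, n / τ ∈ (k - 1, k)` says precisely that
`(k * σ - m, k * τ - n)` lies in the corner rectangle. Conversely a point of the rectangle gives
such a pair, after replacing `(m, n)` by `(-m, -n)` when `m / σ > n / τ`.
-/

open Set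

lemma Int.floor_le_floor_iff {R : Type*} [Ring R] [LinearOrder R] [IsStrictOrderedRing R]
    [FloorRing R] {a b : R} : ⌊a⌋ ≤ ⌊b⌋ ↔ ∀ m : ℤ, (m : R) ≤ a → (m : R) ≤ b :=
  ⟨fun h _ hm => (Int.cast_le.2 ((Int.le_floor.2 hm).trans h)).trans (Int.floor_le b),
    fun h => Int.le_floor.2 (h _ (Int.floor_le a))⟩

lemma floor_commutator_nonneg_iff_forall_int {σ τ : ℝ} (hσ : 0 < σ) (hτ : 0 ≤ τ) :
    (∀ x : ℝ, ⌊σ * (⌊(σ / τ) * x⌋ : ℝ)⌋ ≥ ⌊(σ / τ) * (⌊σ * x⌋ : ℝ)⌋) ↔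
      ∀ N : ℤ, ⌊σ * (N / τ)⌋ ≤ ⌊σ * (⌊(N : ℝ) / τ⌋ : ℝ)⌋ := by
  have hcomm (y : ℝ) : σ / τ * y = σ * (y / τ) := by ring
  simp only [hcomm, ge_iff_le]
  constructor
  · intro h N
    have hx : σ * ((N : ℝ) / σ / τ) = N / τ := by field_simp
    simpa [mul_div_cancel₀ _ hσ.ne', hx] using h (N / σ)
  · intro h x
    refine (h ⌊σ * x⌋).trans (Int.floor_mono ?_)
    gcongr
    rw [← mul_div_assoc]
    gcongr
    exact Int.floor_le _

lemma floor_mul_le_floor_mul_floor_iff {σ : ℝ} (hσ : 0 < σ) (y : ℝ) :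
    ⌊σ * y⌋ ≤ ⌊σ * (⌊y⌋ : ℝ)⌋ ↔ ∀ m : ℤ, (m : ℝ) / σ ≤ y → (m : ℝ) / σ ≤ ⌊y⌋ := by
  simp only [Int.floor_le_floor_iff, div_le_iff₀' hσ]

lemma intCast_div_mem_Ioo_iff {σ : ℝ} (hσ : 0 < σ) (k m : ℤ) :
    (m : ℝ) / σ ∈ Ioo ((k : ℝ) - 1) k ↔ 0 < (k : ℝ) * σ - m ∧ (k : ℝ) * σ - m < σ := by
  rw [mem_Ioo, lt_div_iff₀ hσ, div_lt_iff₀ hσ]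
  constructor <;> rintro ⟨h₁, h₂⟩ <;> constructor <;> linarith

lemma forall_le_floor_iff_no_common_Ioo (A B : AddSubgroup ℝ) :
    (∀ a ∈ A, ∀ b ∈ B, a ≤ b → a ≤ ⌊b⌋) ↔
      ∀ k : ℤ, ∀ a ∈ A, ∀ b ∈ B, ¬ (a ∈ Ioo ((k : ℝ) - 1) k ∧ b ∈ Ioo ((k : ℝ) - 1) k) := by
  constructor
  · rintro h k a ha b hb ⟨⟨ha₁, ha₂⟩, hb₁, hb₂⟩
    rcases le_total a b with hab | hba
    · have hfloor : ⌊b⌋ = k - 1 :=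
        Int.floor_eq_iff.2 ⟨by push_cast; linarith, by push_cast; linarith⟩
      have := h a ha b hb hab
      rw [hfloor] at this
      push_cast at this
      linarith
    · have hceil : ⌈b⌉ = k := Int.ceil_eq_iff.2 ⟨hb₁, hb₂.le⟩
      have := h (-a) (A.neg_mem ha) (-b) (B.neg_mem hb) (neg_le_neg hba)
      rw [Int.floor_neg, hceil] at this
      push_cast at this
      linarith
  · intro h a ha b hb hab
    by_contra! hlt
    refine h (⌊b⌋ + 1) a ha b hb ⟨⟨?_, ?_⟩, ?_, ?_⟩ <;> push_cast <;>
      linarith [Int.lt_floor_add_one b]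

/-- Torus subgroup criterion: for σ, τ > 0, [f_σ, f_{σ/τ}] ≥ 0 holds iff for all
integers k, m, n it is not the case that 0 < k·σ − m < σ and 0 < k·τ − n < τ;
i.e. the cyclic torus subgroup generated by (σ, τ) avoids the open corner
rectangle C_{σ,τ}. -/
theorem torus_subgroup_criterion (σ τ : ℝ) (hσ : 0 < σ) (hτ : 0 < τ) :
    (∀ x : ℝ, ⌊σ * (⌊(σ / τ) * x⌋ : ℝ)⌋ ≥ ⌊(σ / τ) * (⌊σ * x⌋ : ℝ)⌋) ↔
      ∀ k m n : ℤ, ¬ (0 < (k : ℝ) * σ - (m : ℝ) ∧ (k : ℝ) * σ - (m : ℝ) < σ ∧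
        0 < (k : ℝ) * τ - (n : ℝ) ∧ (k : ℝ) * τ - (n : ℝ) < τ) := by
  have hgrid := forall_le_floor_iff_no_common_Ioo
    (AddSubgroup.zmultiples σ⁻¹) (AddSubgroup.zmultiples τ⁻¹)
  simp only [AddSubgroup.mem_zmultiples_iff, forall_exists_index, forall_apply_eq_imp_iff,
    zsmul_eq_mul, ← div_eq_mul_inv, intCast_div_mem_Ioo_iff hσ, intCast_div_mem_Ioo_iff hτ,
    and_assoc] at hgrid
  rw [floor_commutator_nonneg_iff_forall_int hσ hτ.le, ← hgrid, forall_comm]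
  simp only [floor_mul_le_floor_mul_floor_iff hσ]
end
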